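/- arXiv:1905.00216 — 6 statements merged into one kernel-verified Lean document; each statement's English description precedes it below -/
import Mathlib

section
/- Let h : (0,∞) → ℝ be continuous, positive, and increasing, let R ∈ (0,∞], let (t_j) ⊂ (0,R) converge to some t ∈ (0,R), and let (p_j) ⊂ (1,p₀) with p_j → 1 for some p₀ > 1. If R = ∞, assume moreover that h^{-1/(p₀-1)} is integrable at infinity. Then lim_{j→∞} ( ∫_{t_j}^R h(s)^{-1/(p_j-1)} ds )^{p_j-1} = 1/h(t). -/
/-!
With `q = 1/(p-1) → ∞`, the quantity `(∫_{t_j}^R h^{-q})^{1/q}` is an `L^q`-norm of `1/h`, so it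
tends to `sup 1/h = 1/h(t)`, the supremum sitting at the left endpoint because `h` increases.
Monotonicity bounds the integral above by `K h(t_j)^{-q}` (beyond some `A`, the integrand is at most
`h(A)^{q₀-q} h^{-q₀}`, which is integrable), continuity of `h` at `t` bounds it below by
`δ c^{-q}` for every `c > h(t)`, and the constants `K, δ` disappear after raising to the power
`1/q → 0`.
-/

open MeasureTheory Filter Set Topology

theorem mul_rpow_neg_one_div_rpow {K x e : ℝ} (hK : 0 ≤ K) (hx : 0 ≤ x) (he : e ≠ 0) :
    (K * x ^ (-(1 / e))) ^ e = K ^ e * x⁻¹ := by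
  rw [Real.mul_rpow hK (Real.rpow_nonneg hx _), ← Real.rpow_mul hx,
    show -(1 / e) * e = -1 by field_simp, Real.rpow_neg_one]

theorem tendsto_rpow_of_rpow_neg_one_div_bounds {ι : Type*} {l : Filter ι} {e I u : ι → ℝ} {U : ℝ}
    (he : Tendsto e l (𝓝 0)) (he0 : ∀ᶠ j in l, 0 < e j) (hU : 0 < U) (hu : Tendsto u l (𝓝 U))
    (hupper : ∃ K > 0, ∀ᶠ j in l, I j ≤ K * u j ^ (-(1 / e j)))
    (hlower : ∀ c > U, ∃ δ > 0, ∀ᶠ j in l, δ * c ^ (-(1 / e j)) ≤ I j) :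
    Tendsto (fun j => I j ^ e j) l (𝓝 U⁻¹) := by
  have hpow : ∀ {K : ℝ}, 0 < K → Tendsto (fun j => K ^ e j) l (𝓝 1) := fun hK => by
    simpa [Function.comp_def] using (Real.continuousAt_const_rpow hK.ne').tendsto.comp he
  have hI0 : ∀ᶠ j in l, 0 ≤ I j := by
    obtain ⟨δ, hδ, hδI⟩ := hlower (U + 1) (by linarith)
    exact hδI.mono fun j hj => (mul_nonneg hδ.le (Real.rpow_nonneg (by linarith) _)).trans hj
  refine tendsto_order.2 ⟨fun a ha => ?_, fun b hb => ?_⟩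
  · obtain ⟨c, hac, hUc⟩ : ∃ c, a < c⁻¹ ∧ U < c :=
      ((((continuousAt_inv₀ hU.ne').tendsto.mono_left nhdsWithin_le_nhds).eventually
        (lt_mem_nhds ha)).and (self_mem_nhdsWithin (s := Ioi U))).exists
    have hc : 0 ≤ c := (hU.trans hUc).le
    obtain ⟨δ, hδ, hδI⟩ := hlower c hUc
    have hlim : Tendsto (fun j => δ ^ e j * c⁻¹) l (𝓝 c⁻¹) := by
      simpa using (hpow hδ).mul_const c⁻¹
    filter_upwards [hlim.eventually (lt_mem_nhds hac), hδI, he0] with j hj hδj hej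
    calc a < δ ^ e j * c⁻¹ := hj
      _ = (δ * c ^ (-(1 / e j))) ^ e j := (mul_rpow_neg_one_div_rpow hδ.le hc hej.ne').symm
      _ ≤ I j ^ e j := Real.rpow_le_rpow (mul_nonneg hδ.le (Real.rpow_nonneg hc _)) hδj hej.le
  · obtain ⟨K, hK, hKI⟩ := hupper
    have hlim : Tendsto (fun j => K ^ e j * (u j)⁻¹) l (𝓝 U⁻¹) := by
      simpa using (hpow hK).mul (hu.inv₀ hU.ne')
    filter_upwards [hlim.eventually (gt_mem_nhds hb), hKI, he0, hI0,
      hu.eventually (lt_mem_nhds hU)] with j hj hKj hej hIj huj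
    calc I j ^ e j ≤ (K * u j ^ (-(1 / e j))) ^ e j := Real.rpow_le_rpow hIj hKj hej.le
      _ = K ^ e j * (u j)⁻¹ := mul_rpow_neg_one_div_rpow hK.le huj.le hej.ne'
      _ < b := hj

theorem Filter.Tendsto.exists_pos_eventually_Ioo_subset {ι : Type*} {l : Filter ι} {t : ι → ℝ}
    {T : ℝ} (ht : Tendsto t l (𝓝 T)) {W : Set ℝ} (hW : W ∈ 𝓝 T) :
    ∃ δ > 0, ∀ᶠ j in l, Ioo (t j) (t j + δ) ⊆ W := by
  obtain ⟨ε, hε, hball⟩ := Metric.mem_nhds_iff.1 hW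
  refine ⟨ε / 2, half_pos hε, ?_⟩
  filter_upwards [Metric.tendsto_nhds.1 ht (ε / 2) (half_pos hε)] with j hj x hx
  rw [Real.dist_eq, abs_lt] at hj
  apply hball
  rw [Metric.mem_ball, Real.dist_eq, abs_lt]
  constructor <;> linarith [hx.1, hx.2]

theorem mul_le_setIntegral_of_Ioo_subset {f : ℝ → ℝ} {S : Set ℝ} {a δ m : ℝ} (hδ : 0 ≤ δ)
    (hS : MeasurableSet S) (hf : IntegrableOn f S) (hf0 : ∀ x ∈ S, 0 ≤ f x)
    (hsub : Ioo a (a + δ) ⊆ S) (hm : ∀ x ∈ Ioo a (a + δ), m ≤ f x) :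
    δ * m ≤ ∫ x in S, f x :=
  calc δ * m = m * volume.real (Ioo a (a + δ)) := by
        rw [Real.volume_real_Ioo, add_sub_cancel_left, max_eq_left hδ, mul_comm]
    _ ≤ ∫ x in Ioo a (a + δ), f x :=
        setIntegral_ge_of_const_le_real measurableSet_Ioo measure_Ioo_lt_top.ne hm
          (hf.mono_set hsub)
    _ ≤ ∫ x in S, f x :=
        setIntegral_mono_set hf ((ae_restrict_iff' hS).2 (Eventually.of_forall hf0))
          hsub.eventuallyLE

section ModelVolume

variable {h : ℝ → ℝ}

theorem aestronglyMeasurable_rpow_of_subset_Ioi (hcont : ContinuousOn h (Ioi 0))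
    (hpos : ∀ s, 0 < s → 0 < h s) (q : ℝ) {S : Set ℝ} (hS : S ⊆ Ioi 0) :
    AEStronglyMeasurable (fun s => h s ^ q) (volume.restrict S) :=
  ((hcont.rpow_const fun s hs => Or.inl (hpos s hs).ne').aestronglyMeasurable
    measurableSet_Ioi).mono_measure (Measure.restrict_mono hS le_rfl)

theorem norm_rpow_neg_le (hpos : ∀ s, 0 < s → 0 < h s) (hmono : MonotoneOn h (Ioi 0))
    {t s q : ℝ} (ht : 0 < t) (hts : t ≤ s) (hq : 0 ≤ q) : ‖h s ^ (-q)‖ ≤ h t ^ (-q) := by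
  rw [Real.norm_of_nonneg (Real.rpow_nonneg (hpos s (ht.trans_le hts)).le _)]
  exact Real.rpow_le_rpow_of_nonpos (hpos t ht) (hmono ht (ht.trans_le hts) hts)
    (neg_nonpos.2 hq)

theorem integrableOn_rpow_neg_of_subset_Ioi (hcont : ContinuousOn h (Ioi 0))
    (hpos : ∀ s, 0 < s → 0 < h s) (hmono : MonotoneOn h (Ioi 0)) {t q : ℝ} (ht : 0 < t)
    (hq : 0 ≤ q) {S : Set ℝ} (hS : MeasurableSet S) (hSt : S ⊆ Ioi t) (hSfin : volume S < ⊤) :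
    IntegrableOn (fun s => h s ^ (-q)) S :=
  .of_bound hSfin
    (aestronglyMeasurable_rpow_of_subset_Ioi hcont hpos _ (hSt.trans (Ioi_subset_Ioi ht.le)))
    (h t ^ (-q))
    ((ae_restrict_iff' hS).2 (Eventually.of_forall fun _ hs =>
      norm_rpow_neg_le hpos hmono ht (hSt hs).le hq))

theorem setIntegral_rpow_neg_le_of_subset_Ioi (hpos : ∀ s, 0 < s → 0 < h s)
    (hmono : MonotoneOn h (Ioi 0)) {t q : ℝ} (ht : 0 < t) (hq : 0 ≤ q) {S : Set ℝ}
    (hSt : S ⊆ Ioi t) (hSfin : volume S < ⊤) :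
    ∫ s in S, h s ^ (-q) ≤ h t ^ (-q) * volume.real S :=
  (Real.le_norm_self _).trans <| norm_setIntegral_le_of_norm_le_const hSfin fun _ hs =>
    norm_rpow_neg_le hpos hmono ht (hSt hs).le hq

theorem rpow_neg_le_mul_rpow_neg (hpos : ∀ s, 0 < s → 0 < h s) (hmono : MonotoneOn h (Ioi 0))
    {A s q₀ q : ℝ} (hA : 0 < A) (hAs : A ≤ s) (hq : q₀ ≤ q) :
    h s ^ (-q) ≤ h A ^ (q₀ - q) * h s ^ (-q₀) := by
  have hs := hpos s (hA.trans_le hAs)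
  calc h s ^ (-q) = h s ^ (q₀ - q) * h s ^ (-q₀) := by rw [← Real.rpow_add hs]; ring_nf
    _ ≤ h A ^ (q₀ - q) * h s ^ (-q₀) :=
      mul_le_mul_of_nonneg_right
        (Real.rpow_le_rpow_of_nonpos (hpos A hA) (hmono hA (hA.trans_le hAs) hAs) (by linarith))
        (Real.rpow_nonneg hs.le _)

theorem integrableOn_Ioi_rpow_neg_of_le (hcont : ContinuousOn h (Ioi 0))
    (hpos : ∀ s, 0 < s → 0 < h s) (hmono : MonotoneOn h (Ioi 0)) {A q₀ q : ℝ} (hA : 0 < A)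
    (hq : q₀ ≤ q) (hint : IntegrableOn (fun s => h s ^ (-q₀)) (Ioi A)) :
    IntegrableOn (fun s => h s ^ (-q)) (Ioi A) := by
  refine (hint.const_mul (h A ^ (q₀ - q))).mono'
    (aestronglyMeasurable_rpow_of_subset_Ioi hcont hpos _ (Ioi_subset_Ioi hA.le))
    ((ae_restrict_iff' measurableSet_Ioi).2 (Eventually.of_forall fun s hs => ?_))
  rw [Real.norm_of_nonneg (Real.rpow_nonneg (hpos s (hA.trans hs)).le _)]
  exact rpow_neg_le_mul_rpow_neg hpos hmono hA (le_of_lt hs) hq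

theorem setIntegral_Ioi_rpow_neg_le (hcont : ContinuousOn h (Ioi 0))
    (hpos : ∀ s, 0 < s → 0 < h s) (hmono : MonotoneOn h (Ioi 0)) {A q₀ q : ℝ} (hA : 0 < A)
    (hq : q₀ ≤ q) (hint : IntegrableOn (fun s => h s ^ (-q₀)) (Ioi A)) :
    ∫ s in Ioi A, h s ^ (-q) ≤ h A ^ (q₀ - q) * ∫ s in Ioi A, h s ^ (-q₀) := by
  rw [← integral_const_mul]
  exact setIntegral_mono_on (integrableOn_Ioi_rpow_neg_of_le hcont hpos hmono hA hq hint)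
    (hint.const_mul _) measurableSet_Ioi fun s hs =>
      rpow_neg_le_mul_rpow_neg hpos hmono hA (le_of_lt hs) hq


theorem integrableOn_Ioi_rpow_neg_and_integral_le (hcont : ContinuousOn h (Ioi 0))
    (hpos : ∀ s, 0 < s → 0 < h s) (hmono : MonotoneOn h (Ioi 0)) {t A q₀ q : ℝ} (ht : 0 < t)
    (htA : t ≤ A) (hq₀ : 0 ≤ q₀) (hq : q₀ ≤ q)
    (hint : IntegrableOn (fun s => h s ^ (-q₀)) (Ioi A)) :
    IntegrableOn (fun s => h s ^ (-q)) (Ioi t) ∧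
      ∫ s in Ioi t, h s ^ (-q) ≤ (A + h A ^ q₀ * ∫ s in Ioi A, h s ^ (-q₀)) * h t ^ (-q) := by
  have hA : 0 < A := ht.trans_le htA
  have hq' : 0 ≤ q := hq₀.trans hq
  have hnear := integrableOn_rpow_neg_of_subset_Ioi hcont hpos hmono ht hq'
    (S := Ioc t A) measurableSet_Ioc Ioc_subset_Ioi_self measure_Ioc_lt_top
  have htail := integrableOn_Ioi_rpow_neg_of_le hcont hpos hmono hA hq hint
  rw [← Ioc_union_Ioi_eq_Ioi htA]
  refine ⟨hnear.union htail, ?_⟩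
  rw [setIntegral_union (Ioc_disjoint_Ioi le_rfl) measurableSet_Ioi hnear htail]
  have hvol : volume.real (Ioc t A) ≤ A := by
    rw [Real.volume_real_Ioc]; exact max_le (by linarith) hA.le
  have hhA : h A ^ (q₀ - q) ≤ h A ^ q₀ * h t ^ (-q) := by
    rw [sub_eq_add_neg, Real.rpow_add (hpos A hA)]
    exact mul_le_mul_of_nonneg_left
      (Real.rpow_le_rpow_of_nonpos (hpos t ht) (hmono ht hA htA) (neg_nonpos.2 hq'))
      (Real.rpow_nonneg (hpos A hA).le _)
  have hC : 0 ≤ ∫ s in Ioi A, h s ^ (-q₀) := setIntegral_nonneg measurableSet_Ioi fun s hs =>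
    Real.rpow_nonneg (hpos s (hA.trans hs)).le _
  calc (∫ s in Ioc t A, h s ^ (-q)) + ∫ s in Ioi A, h s ^ (-q)
      ≤ h t ^ (-q) * A + h A ^ q₀ * h t ^ (-q) * ∫ s in Ioi A, h s ^ (-q₀) :=
        add_le_add
          ((setIntegral_rpow_neg_le_of_subset_Ioi hpos hmono ht hq' Ioc_subset_Ioi_self
            measure_Ioc_lt_top).trans
            (mul_le_mul_of_nonneg_left hvol (Real.rpow_nonneg (hpos t ht).le _)))
          ((setIntegral_Ioi_rpow_neg_le hcont hpos hmono hA hq hint).trans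
            (mul_le_mul_of_nonneg_right hhA hC))
    _ = (A + h A ^ q₀ * ∫ s in Ioi A, h s ^ (-q₀)) * h t ^ (-q) := by ring

theorem exists_pos_forall_integral_rpow_neg_le (hcont : ContinuousOn h (Ioi 0))
    (hpos : ∀ s, 0 < s → 0 < h s) (hmono : MonotoneOn h (Ioi 0)) {R : EReal} (hR : 0 < R)
    {q₀ : ℝ} (hq₀ : 0 ≤ q₀) (hint : R = ⊤ → ∃ a : ℝ, IntegrableOn (fun s => h s ^ (-q₀)) (Ioi a))
    (B : ℝ) :
    ∃ K > 0, ∀ t, 0 < t → t ≤ B → ∀ q, q₀ ≤ q →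
      IntegrableOn (fun s => h s ^ (-q)) {s | t < s ∧ (s : EReal) < R} ∧
        ∫ s in {s | t < s ∧ (s : EReal) < R}, h s ^ (-q) ≤ K * h t ^ (-q) := by
  induction R using EReal.rec with
  | bot => exact absurd hR not_lt_bot
  | coe r =>
    have hr : 0 < r := EReal.coe_pos.1 hR
    refine ⟨r, hr, fun t ht _ q hq => ?_⟩
    have hq' : 0 ≤ q := hq₀.trans hq
    have hS : {s : ℝ | t < s ∧ (s : EReal) < r} = Ioo t r := by
      ext; simp [EReal.coe_lt_coe_iff]
    rw [hS]
    refine ⟨integrableOn_rpow_neg_of_subset_Ioi hcont hpos hmono ht hq' measurableSet_Ioo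
      Ioo_subset_Ioi_self measure_Ioo_lt_top, ?_⟩
    calc ∫ s in Ioo t r, h s ^ (-q)
        ≤ h t ^ (-q) * volume.real (Ioo t r) :=
          setIntegral_rpow_neg_le_of_subset_Ioi hpos hmono ht hq' Ioo_subset_Ioi_self
            measure_Ioo_lt_top
      _ ≤ h t ^ (-q) * r := by
          refine mul_le_mul_of_nonneg_left ?_ (Real.rpow_nonneg (hpos t ht).le _)
          rw [Real.volume_real_Ioo]
          exact max_le (by linarith) hr.le
      _ = r * h t ^ (-q) := mul_comm _ _
  | top =>
    obtain ⟨a, ha⟩ := hint rfl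
    set A := max (max a B) 1
    have hA : 0 < A := one_pos.trans_le (le_max_right _ _)
    have hC : 0 ≤ ∫ s in Ioi A, h s ^ (-q₀) := setIntegral_nonneg measurableSet_Ioi fun s hs =>
      Real.rpow_nonneg (hpos s (hA.trans hs)).le _
    refine ⟨A + h A ^ q₀ * ∫ s in Ioi A, h s ^ (-q₀),
      add_pos_of_pos_of_nonneg hA (mul_nonneg (Real.rpow_nonneg (hpos A hA).le _) hC),
      fun t ht htB q hq => ?_⟩
    have hS : {s : ℝ | t < s ∧ (s : EReal) < ⊤} = Ioi t := by ext; simp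
    rw [hS]
    exact integrableOn_Ioi_rpow_neg_and_integral_le hcont hpos hmono ht
      (htB.trans ((le_max_right a B).trans (le_max_left _ _))) hq₀ hq
      (ha.mono_set (Ioi_subset_Ioi ((le_max_left a B).trans (le_max_left _ _))))

theorem exists_pos_eventually_mul_rpow_neg_le_integral (hcont : ContinuousOn h (Ioi 0))
    (hpos : ∀ s, 0 < s → 0 < h s) {ι : Type*} {l : Filter ι} {R : EReal} {T : ℝ}
    {t q : ι → ℝ} (hT0 : 0 < T) (hTR : (T : EReal) < R) (htlim : Tendsto t l (𝓝 T))
    (hq : ∀ᶠ j in l, 0 ≤ q j)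
    (hint : ∀ᶠ j in l, IntegrableOn (fun s => h s ^ (-q j)) {s | t j < s ∧ (s : EReal) < R})
    {c : ℝ} (hc : h T < c) :
    ∃ δ > 0, ∀ᶠ j in l, δ * c ^ (-q j) ≤ ∫ s in {s | t j < s ∧ (s : EReal) < R}, h s ^ (-q j) := by
  have hW : {x : ℝ | (x : EReal) < R} ∩ h ⁻¹' Iio c ∈ 𝓝 T :=
    inter_mem ((isOpen_lt continuous_coe_real_ereal continuous_const).mem_nhds hTR)
      ((hcont.continuousAt (Ioi_mem_nhds hT0)).preimage_mem_nhds (Iio_mem_nhds hc))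
  obtain ⟨δ, hδ, hsub⟩ := htlim.exists_pos_eventually_Ioo_subset hW
  refine ⟨δ, hδ, ?_⟩
  filter_upwards [hsub, hint, hq, htlim.eventually (lt_mem_nhds hT0)] with j hj hintj hqj htj
  exact mul_le_setIntegral_of_Ioo_subset hδ.le
    (measurableSet_Ioi.inter (measurableSet_lt measurable_coe_real_ereal measurable_const))
    hintj (fun s hs => Real.rpow_nonneg (hpos s (htj.trans hs.1)).le _)
    (fun x hx => ⟨hx.1, (hj hx).1⟩)
    (fun x hx => Real.rpow_le_rpow_of_nonpos (hpos x (htj.trans hx.1)) (hj hx).2.le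
      (neg_nonpos.2 hqj))

end ModelVolume

theorem stmt_0_general (h : ℝ → ℝ) (R : EReal) (p₀ : ℝ) (t : ℕ → ℝ) (T : ℝ) (p : ℕ → ℝ)
    (hcont : ContinuousOn h (Set.Ioi 0))
    (hpos : ∀ s : ℝ, 0 < s → 0 < h s)
    (hmono : MonotoneOn h (Set.Ioi 0))
    (ht : ∀ j, 0 < t j ∧ (t j : EReal) < R)
    (htlim : Tendsto t atTop (nhds T))
    (hT0 : 0 < T) (hTR : (T : EReal) < R)
    (hp : ∀ j, 1 < p j ∧ p j < p₀)
    (hplim : Tendsto p atTop (nhds 1))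
    (hint : R = ⊤ → ∃ a : ℝ, IntegrableOn (fun s => h s ^ (-(1 / (p₀ - 1)))) (Set.Ioi a)) :
    Tendsto (fun j => (∫ s in {s : ℝ | t j < s ∧ (s : EReal) < R},
        h s ^ (-(1 / (p j - 1)))) ^ (p j - 1)) atTop (nhds (1 / h T)) := by
  have he : ∀ j, 0 < p j - 1 := fun j => sub_pos.2 (hp j).1
  obtain ⟨K, hK, hKbound⟩ := exists_pos_forall_integral_rpow_neg_le hcont hpos hmono
    ((EReal.coe_pos.2 hT0).trans hTR) (one_div_nonneg.2 (by linarith [hp 0]))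
    hint (T + 1)
  have hbound : ∀ᶠ j in atTop,
      IntegrableOn (fun s => h s ^ (-(1 / (p j - 1)))) {s | t j < s ∧ (s : EReal) < R} ∧
        ∫ s in {s | t j < s ∧ (s : EReal) < R}, h s ^ (-(1 / (p j - 1))) ≤
          K * h (t j) ^ (-(1 / (p j - 1))) := by
    filter_upwards [htlim.eventually (gt_mem_nhds (lt_add_one T))] with j hj
    exact hKbound (t j) (ht j).1 hj.le _
      (one_div_le_one_div_of_le (he j) (by linarith [(hp j).2]))
  rw [one_div]
  refine tendsto_rpow_of_rpow_neg_one_div_bounds (by simpa using hplim.sub_const 1)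
    (Eventually.of_forall he) (hpos T hT0)
    ((hcont.continuousAt (Ioi_mem_nhds hT0)).tendsto.comp htlim)
    ⟨K, hK, hbound.mono fun j hj => hj.2⟩ fun c hc => ?_
  exact exists_pos_eventually_mul_rpow_neg_le_integral hcont hpos hT0 hTR htlim
    (Eventually.of_forall fun j => one_div_nonneg.2 (he j).le) (hbound.mono fun j hj => hj.1) hc

/-- limit of (∫_{t_j}^R h^{-1/(p_j-1)})^{p_j-1} as p_j → 1, t_j → t. -/
theorem stmt_0 (h : ℝ → ℝ) (R : EReal) (p₀ : ℝ) (t : ℕ → ℝ) (T : ℝ) (p : ℕ → ℝ)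
    (hcont : ContinuousOn h (Set.Ioi 0))
    (hpos : ∀ s : ℝ, 0 < s → 0 < h s)
    (hmono : MonotoneOn h (Set.Ioi 0))
    (hR : (0 : EReal) < R)
    (hp₀ : 1 < p₀)
    (ht : ∀ j, 0 < t j ∧ (t j : EReal) < R)
    (htlim : Tendsto t atTop (nhds T))
    (hT0 : 0 < T) (hTR : (T : EReal) < R)
    (hp : ∀ j, 1 < p j ∧ p j < p₀)
    (hplim : Tendsto p atTop (nhds 1))
    (hint : R = ⊤ → ∃ a : ℝ, IntegrableOn (fun s => h s ^ (-(1 / (p₀ - 1)))) (Set.Ioi a)) :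
    Tendsto (fun j => (∫ s in {s : ℝ | t j < s ∧ (s : EReal) < R},
        h s ^ (-(1 / (p j - 1)))) ^ (p j - 1)) atTop (nhds (1 / h T)) :=
  stmt_0_general h R p₀ t T p hcont hpos hmono ht htlim hT0 hTR hp hplim hint
end

section
/- Let k > 1, p > 1 and q > 0 be real numbers. Then there exists q₀ ∈ (q/k, q] such that |q₀ k^i − p + 1| ≥ (k−1)q/(2k) for every integer i ≥ 0. Moreover, if p − 1 ≤ q/k one may take q₀ = q. -/
/-!
Put `a = p - 1` and `c = (k - 1) q / (2k)`, so that `2c = (q / k)(k - 1)`. If some term `q k^j`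
comes within `c` of `a`, restart the sequence so that its `j`-th term is exactly `a - c`, i.e. take
`q₀ = (a - c) / k^j`. The terms before it then stay below `a - c`, and since consecutive terms of a
geometric sequence starting above `q / k` are more than `2c` apart, the terms after it stay above
`a + c`. Closeness of `q k^j` to `a` is what places `q₀` in `(q / k, q]`.
-/

lemma le_abs_mul_pow_sub_of_add_le {k q a c : ℝ} (hk : 1 ≤ k) (hq : 0 ≤ q) (h : a + c ≤ q)
    (i : ℕ) : c ≤ |q * k ^ i - a| := by
  have : q ≤ q * k ^ i := le_mul_of_one_le_right hq (one_le_pow₀ hk)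
  exact le_abs.mpr (Or.inl (by linarith))

lemma le_abs_mul_pow_sub_of_mul_pow_eq {k q₀ a c : ℝ} (hk : 1 ≤ k) (hq₀ : 0 ≤ q₀)
    (hgap : 2 * c ≤ q₀ * (k - 1)) {j : ℕ} (hj : q₀ * k ^ j = a - c) (i : ℕ) :
    c ≤ |q₀ * k ^ i - a| := by
  rcases le_or_gt i j with hij | hji
  · have : q₀ * k ^ i ≤ q₀ * k ^ j := mul_le_mul_of_nonneg_left (pow_le_pow_right₀ hk hij) hq₀
    exact le_abs.mpr (Or.inr (by linarith))
  · have hnext : q₀ * k ^ (j + 1) ≤ q₀ * k ^ i :=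
      mul_le_mul_of_nonneg_left (pow_le_pow_right₀ hk hji) hq₀
    have hstep : q₀ * (k - 1) ≤ q₀ * k ^ j * (k - 1) :=
      mul_le_mul_of_nonneg_right (le_mul_of_one_le_right hq₀ (one_le_pow₀ hk)) (by linarith)
    have : q₀ * k ^ (j + 1) = q₀ * k ^ j * (k - 1) + q₀ * k ^ j := by ring
    exact le_abs.mpr (Or.inl (by linarith))

lemma sub_div_pow_mem_Ioc_of_abs_lt {k q a c : ℝ} (hk : 1 < k) (hq : 0 < q)
    (hc : 2 * c = q / k * (k - 1)) {j : ℕ} (hj : |q * k ^ j - a| < c) :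
    (a - c) / k ^ j ∈ Set.Ioc (q / k) q := by
  have hkj : 0 < k ^ j := pow_pos (by linarith) j
  obtain ⟨hlo, hhi⟩ := abs_lt.mp hj
  have hq_eq : q / k * k ^ j + q / k * (k - 1) * k ^ j = q * k ^ j := by
    field_simp; ring
  have hgrowth : q / k * (k - 1) ≤ q / k * (k - 1) * k ^ j :=
    le_mul_of_one_le_right (by rw [← hc]; linarith [abs_nonneg (q * k ^ j - a)])
      (one_le_pow₀ hk.le)
  constructor
  · rw [lt_div_iff₀ hkj]
    linarith
  · rw [div_le_iff₀ hkj]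
    linarith

theorem stmt_1_general (k p q : ℝ) (hk : 1 < k) (hq : 0 < q) :
    (∃ q₀ : ℝ, q / k < q₀ ∧ q₀ ≤ q ∧
      ∀ i : ℕ, (k - 1) * q / (2 * k) ≤ |q₀ * k ^ i - p + 1|) ∧
    (p - 1 ≤ q / k →
      ∀ i : ℕ, (k - 1) * q / (2 * k) ≤ |q * k ^ i - p + 1|) := by
  set c := (k - 1) * q / (2 * k) with hc_def
  have hc : 2 * c = q / k * (k - 1) := by
    rw [hc_def]; field_simp
  have hc0 : 0 ≤ c := div_nonneg (mul_nonneg (by linarith) hq.le) (by linarith)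
  have hq_split : q / k + 2 * c = q := by
    rw [hc]; field_simp; ring
  simp only [sub_add]
  refine ⟨?_, fun hpq => le_abs_mul_pow_sub_of_add_le hk.le hq.le (by linarith)⟩
  by_cases hfar : ∀ i : ℕ, c ≤ |q * k ^ i - (p - 1)|
  · exact ⟨q, div_lt_self hq (by linarith), le_rfl, hfar⟩
  push Not at hfar
  obtain ⟨j, hj⟩ := hfar
  obtain ⟨hlo, hhi⟩ := sub_div_pow_mem_Ioc_of_abs_lt hk hq hc hj
  have hq₀ : 0 ≤ (p - 1 - c) / k ^ j := by
    have := div_pos hq (by linarith : (0 : ℝ) < k); linarith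
  refine ⟨_, hlo, hhi, le_abs_mul_pow_sub_of_mul_pow_eq hk.le hq₀ (j := j) ?_ ?_⟩
  · rw [hc]; exact mul_le_mul_of_nonneg_right hlo.le (by linarith)
  · exact div_mul_cancel₀ _ (pow_pos (by linarith) j).ne'

/-- choice of the starting exponent in the Moser iteration. -/
theorem stmt_1 (k p q : ℝ) (hk : 1 < k) (hp : 1 < p) (hq : 0 < q) :
    (∃ q₀ : ℝ, q / k < q₀ ∧ q₀ ≤ q ∧
      ∀ i : ℕ, (k - 1) * q / (2 * k) ≤ |q₀ * k ^ i - p + 1|) ∧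
    (p - 1 ≤ q / k →
      ∀ i : ℕ, (k - 1) * q / (2 * k) ≤ |q * k ^ i - p + 1|) :=
  stmt_1_general k p q hk hq
end

section
/- Let H : [0,∞) → ℝ be continuously differentiable, non-negative and non-increasing, and let h : [0,∞) → ℝ solve h'' = H·h with h(0) = 0, h'(0) = 1, with h > 0 on (0,∞). Then (h'(t))² − h(t)h''(t) ≥ 1 for all t ≥ 0, and equality holds at some t₀ > 0 if and only if H is constant on [0,t₀]. -/
/-!
Along a solution of `h'' = H h` the quantity `(h')² − h h''` equals the energy
`E = (h')² − H h²`, and the ODE cancels all but one term of its derivative: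
`E' = −H' h² ≥ 0`.
With `E(0) = 1` this gives `E ≥ 1`. If `E(t₀) = 1`, monotonicity forces `E` to be constant on
`[0, t₀]`, so `H' h² = 0` there, and since `h > 0` on `(0, t₀)` this says `H' = 0`; conversely
`H' = 0` makes `E' = 0`.
-/

open Set Topology

lemma AntitoneOn.deriv_nonpos_of_mem_nhds {f : ℝ → ℝ} {s : Set ℝ} {x : ℝ}
    (hf : AntitoneOn f s) (hs : s ∈ 𝓝 x) : deriv f x ≤ 0 := by
  rw [← derivWithin_of_mem_nhds hs]
  exact hf.derivWithin_nonpos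

lemma MonotoneOn.forall_mem_Icc_eq_left_iff {α β : Type*} [Preorder α] [PartialOrder β]
    {f : α → β} {a b : α} (hf : MonotoneOn f (Icc a b)) (hab : a ≤ b) :
    (∀ x ∈ Icc a b, f x = f a) ↔ f b = f a := by
  refine ⟨fun h ↦ h b (right_mem_Icc.2 hab), fun hb x hx ↦ le_antisymm ?_ ?_⟩
  · exact hb ▸ hf hx (right_mem_Icc.2 hab) hx.2
  · exact hf (left_mem_Icc.2 hab) hx hx.1

lemma forall_mem_Icc_eq_left_iff_deriv_eq_zero {f : ℝ → ℝ} {a b : ℝ}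
    (hfc : ContinuousOn f (Icc a b)) (hfd : DifferentiableOn ℝ f (Ioo a b)) :
    (∀ x ∈ Icc a b, f x = f a) ↔ ∀ x ∈ Ioo a b, deriv f x = 0 := by
  constructor
  · intro hconst x hx
    have hloc : f =ᶠ[𝓝 x] fun _ ↦ f a := by
      filter_upwards [Ioo_mem_nhds hx.1 hx.2] with y hy using hconst y (Ioo_subset_Icc_self hy)
    rw [hloc.deriv_eq, deriv_const]
  · intro hderiv x hx
    rcases hx.1.eq_or_lt with rfl | hax
    · rfl
    obtain ⟨c, hc, hslope⟩ := exists_deriv_eq_slope f hax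
      (hfc.mono (Icc_subset_Icc_right hx.2)) (hfd.mono (Ioo_subset_Ioo_right hx.2))
    rw [hderiv c (Ioo_subset_Ioo_right hx.2 hc), eq_comm, div_eq_zero_iff] at hslope
    exact sub_eq_zero.1 (hslope.resolve_right (sub_ne_zero.2 hax.ne'))

noncomputable def energy (H h : ℝ → ℝ) (t : ℝ) : ℝ :=
  deriv h t ^ 2 - H t * h t ^ 2

section Energy

variable {H h : ℝ → ℝ}

lemma hasDerivAt_energy {t : ℝ} (hH : DifferentiableAt ℝ H t) (hh : DifferentiableAt ℝ h t)
    (hh' : DifferentiableAt ℝ (deriv h) t) (hode : deriv (deriv h) t = H t * h t) :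
    HasDerivAt (energy H h) (-deriv H t * h t ^ 2) t := by
  refine ((hh'.hasDerivAt.fun_pow 2).sub
    (hH.hasDerivAt.mul (hh.hasDerivAt.fun_pow 2))).congr_deriv ?_
  rw [hode]
  ring

lemma monotoneOn_energy (hH : Differentiable ℝ H) (hHanti : AntitoneOn H (Ici 0))
    (hh : Differentiable ℝ h) (hh' : Differentiable ℝ (deriv h))
    (hode : ∀ t ≥ (0 : ℝ), deriv (deriv h) t = H t * h t) :
    MonotoneOn (energy H h) (Ici 0) := by
  have hE t (ht : 0 ≤ t) := hasDerivAt_energy (hH t) (hh t) (hh' t) (hode t ht)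
  refine monotoneOn_of_hasDerivWithinAt_nonneg (f' := fun t ↦ -deriv H t * h t ^ 2)
    (convex_Ici 0) (fun t ht ↦ (hE t ht).continuousAt.continuousWithinAt)
    (fun t ht ↦ ?_) (fun t ht ↦ ?_)
  all_goals rw [interior_Ici] at ht
  · exact (hE t ht.le).hasDerivWithinAt
  · exact mul_nonneg (neg_nonneg.2 (hHanti.deriv_nonpos_of_mem_nhds (Ici_mem_nhds ht)))
      (sq_nonneg _)

end Energy

theorem stmt_4_general (H h : ℝ → ℝ)
    (hH : Differentiable ℝ H)
    (hHanti : AntitoneOn H (Set.Ici 0))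
    (hh1 : Differentiable ℝ h) (hh2 : Differentiable ℝ (deriv h))
    (hode : ∀ t ≥ (0 : ℝ), deriv (deriv h) t = H t * h t)
    (h0 : h 0 = 0) (h1 : deriv h 0 = 1)
    (hpos : ∀ t > (0 : ℝ), 0 < h t) :
    (∀ t ≥ (0 : ℝ), 1 ≤ (deriv h t) ^ 2 - h t * deriv (deriv h) t) ∧
    ∀ t₀ > (0 : ℝ),
      ((deriv h t₀) ^ 2 - h t₀ * deriv (deriv h) t₀ = 1 ↔
        ∀ s ∈ Set.Icc 0 t₀, H s = H 0) := by
  have hE t (ht : 0 ≤ t) := hasDerivAt_energy (hH t) (hh1 t) (hh2 t) (hode t ht)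
  have hmono := monotoneOn_energy hH hHanti hh1 hh2 hode
  have hE0 : energy H h 0 = 1 := by simp [energy, h0, h1]
  have hexpr t (ht : 0 ≤ t) : deriv h t ^ 2 - h t * deriv (deriv h) t = energy H h t := by
    rw [hode t ht, energy]
    ring
  refine ⟨fun t ht ↦ hexpr t ht ▸ hE0 ▸ hmono self_mem_Ici ht ht, fun t₀ ht₀ ↦ ?_⟩
  have hIcc : Icc 0 t₀ ⊆ Ici 0 := Icc_subset_Ici_self
  rw [hexpr t₀ ht₀.le, ← hE0, ← (hmono.mono hIcc).forall_mem_Icc_eq_left_iff ht₀.le,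
    forall_mem_Icc_eq_left_iff_deriv_eq_zero
      (fun t ht ↦ (hE t (hIcc ht)).continuousAt.continuousWithinAt)
      (fun t ht ↦ (hE t ht.1.le).differentiableAt.differentiableWithinAt),
    forall_mem_Icc_eq_left_iff_deriv_eq_zero hH.continuous.continuousOn hH.differentiableOn]
  refine forall₂_congr fun t ht ↦ ?_
  rw [(hE t ht.1.le).deriv, mul_eq_zero, neg_eq_zero,
    or_iff_left (pow_ne_zero 2 (hpos t ht.1).ne')]

/-- (h')² − h h'' ≥ 1, with equality at t₀ > 0 iff H is constant on [0,t₀]. -/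
theorem stmt_4 (H h : ℝ → ℝ)
    (hH : Differentiable ℝ H) (hHc : Continuous (deriv H))
    (hHnn : ∀ t ≥ (0 : ℝ), 0 ≤ H t)
    (hHanti : AntitoneOn H (Set.Ici 0))
    (hh1 : Differentiable ℝ h) (hh2 : Differentiable ℝ (deriv h))
    (hode : ∀ t ≥ (0 : ℝ), deriv (deriv h) t = H t * h t)
    (h0 : h 0 = 0) (h1 : deriv h 0 = 1)
    (hpos : ∀ t > (0 : ℝ), 0 < h t) :
    (∀ t ≥ (0 : ℝ), 1 ≤ (deriv h t) ^ 2 - h t * deriv (deriv h) t) ∧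
    ∀ t₀ > (0 : ℝ),
      ((deriv h t₀) ^ 2 - h t₀ * deriv (deriv h) t₀ = 1 ↔
        ∀ s ∈ Set.Icc 0 t₀, H s = H 0) :=
  stmt_4_general H h hH hHanti hh1 hh2 hode h0 h1 hpos
end

section
/- Let a < b ≤ ∞ and let f, g : (a,b) → (0,∞) be continuous with ∫_t^b f and ∫_t^b g finite for every t ∈ (a,b). If f/g is non-decreasing on (a,b), then f(t) / ∫_t^b f(s) ds ≤ g(t) / ∫_t^b g(s) ds for every t ∈ (a,b). -/
/-!
Write `x = f t`, `y = g t`. Monotonicity of `f / g` gives `x g(s) ≤ y f(s)` for every `s > t`;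
integrating over `(t, b)` yields `x ∫_t^b g ≤ y ∫_t^b f`, which is the claim after clearing the
(positive) denominators.
-/

open MeasureTheory

theorem div_integral_le_div_integral_of_ae_mul_le_mul {α : Type*} [MeasurableSpace α]
    {μ : Measure α} {f g : α → ℝ} {x y : ℝ} (hx : 0 < x) (hy : 0 < y)
    (hf : Integrable f μ) (hg : Integrable g μ) (hg_pos : 0 < ∫ s, g s ∂μ)
    (h : ∀ᵐ s ∂μ, x * g s ≤ y * f s) :
    x / ∫ s, f s ∂μ ≤ y / ∫ s, g s ∂μ := by
  have hint : x * ∫ s, g s ∂μ ≤ y * ∫ s, f s ∂μ := by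
    rw [← integral_const_mul, ← integral_const_mul]
    exact integral_mono_ae (hg.const_mul x) (hf.const_mul y) h
  have hf_pos : 0 < ∫ s, f s ∂μ :=
    pos_of_mul_pos_right ((mul_pos hx hg_pos).trans_le hint) hy.le
  rw [div_le_div_iff₀ hf_pos hg_pos]
  linarith

theorem IsOpen.setIntegral_pos {X : Type*} [TopologicalSpace X] [MeasurableSpace X]
    [OpensMeasurableSpace X] {μ : Measure X} [μ.IsOpenPosMeasure] {U : Set X} {g : X → ℝ}
    (hU : IsOpen U) (hU_ne : U.Nonempty) (hg : IntegrableOn g U μ) (hg_pos : ∀ s ∈ U, 0 < g s) :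
    0 < ∫ s in U, g s ∂μ := by
  have hg_nonneg : 0 ≤ᵐ[μ.restrict U] g :=
    ae_restrict_of_forall_mem hU.measurableSet fun s hs => (hg_pos s hs).le
  rw [setIntegral_pos_iff_support_of_nonneg_ae hg_nonneg hg]
  have hU_sub : U ⊆ Function.support g ∩ U := fun s hs => ⟨(hg_pos s hs).ne', hs⟩
  exact (hU.measure_pos μ hU_ne).trans_le (measure_mono hU_sub)

theorem isOpen_setOf_lt_and_coe_lt (t : ℝ) (b : EReal) :
    IsOpen {s : ℝ | t < s ∧ (s : EReal) < b} :=
  (isOpen_lt continuous_const continuous_id).inter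
    (isOpen_lt continuous_coe_real_ereal continuous_const)

theorem nonempty_setOf_lt_and_coe_lt {t : ℝ} {b : EReal} (htb : (t : EReal) < b) :
    {s : ℝ | t < s ∧ (s : EReal) < b}.Nonempty := by
  obtain ⟨x, htx, hxb⟩ := EReal.lt_iff_exists_real_btwn.mp htb
  exact ⟨x, EReal.coe_lt_coe_iff.mp htx, hxb⟩

theorem stmt_6_general (a : ℝ) (b : EReal)
    (f g : ℝ → ℝ)
    (S : ℝ → Set ℝ) (hS : ∀ t, S t = {s : ℝ | t < s ∧ (s : EReal) < b})
    (hfpos : ∀ s : ℝ, a < s → (s : EReal) < b → 0 < f s)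
    (hgpos : ∀ s : ℝ, a < s → (s : EReal) < b → 0 < g s)
    (hfint : ∀ t : ℝ, a < t → (t : EReal) < b → IntegrableOn f (S t))
    (hgint : ∀ t : ℝ, a < t → (t : EReal) < b → IntegrableOn g (S t))
    (hmono : MonotoneOn (fun s => f s / g s) {s : ℝ | a < s ∧ (s : EReal) < b}) :
    ∀ t : ℝ, a < t → (t : EReal) < b →
      f t / ∫ s in S t, f s ≤ g t / ∫ s in S t, g s := by
  intro t hat htb
  have hfint := hfint t hat htb
  have hgint := hgint t hat htb
  rw [hS] at hfint hgint ⊢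
  have hU := isOpen_setOf_lt_and_coe_lt t b
  have hgpos_on : ∀ s ∈ {s : ℝ | t < s ∧ (s : EReal) < b}, 0 < g s :=
    fun s ⟨hts, hsb⟩ => hgpos s (hat.trans hts) hsb
  have cross_le : ∀ s ∈ {s : ℝ | t < s ∧ (s : EReal) < b}, f t * g s ≤ g t * f s := by
    rintro s ⟨hts, hsb⟩
    have hratio := hmono ⟨hat, htb⟩ ⟨hat.trans hts, hsb⟩ hts.le
    rwa [div_le_div_iff₀ (hgpos t hat htb) (hgpos_on s ⟨hts, hsb⟩), mul_comm (f s)] at hratio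
  exact div_integral_le_div_integral_of_ae_mul_le_mul (hfpos t hat htb) (hgpos t hat htb)
    hfint hgint (IsOpen.setIntegral_pos hU (nonempty_setOf_lt_and_coe_lt htb) hgint hgpos_on)
    (ae_restrict_of_forall_mem hU.measurableSet cross_le)

/-- if f/g is non-decreasing, then f(t)/∫_t^b f ≤ g(t)/∫_t^b g. -/
theorem stmt_6 (a : ℝ) (b : EReal) (hab : (a : EReal) < b)
    (f g : ℝ → ℝ)
    (S : ℝ → Set ℝ) (hS : ∀ t, S t = {s : ℝ | t < s ∧ (s : EReal) < b})
    (hfc : ContinuousOn f {s : ℝ | a < s ∧ (s : EReal) < b})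
    (hgc : ContinuousOn g {s : ℝ | a < s ∧ (s : EReal) < b})
    (hfpos : ∀ s : ℝ, a < s → (s : EReal) < b → 0 < f s)
    (hgpos : ∀ s : ℝ, a < s → (s : EReal) < b → 0 < g s)
    (hfint : ∀ t : ℝ, a < t → (t : EReal) < b → IntegrableOn f (S t))
    (hgint : ∀ t : ℝ, a < t → (t : EReal) < b → IntegrableOn g (S t))
    (hmono : MonotoneOn (fun s => f s / g s) {s : ℝ | a < s ∧ (s : EReal) < b}) :
    ∀ t : ℝ, a < t → (t : EReal) < b →
      f t / ∫ s in S t, f s ≤ g t / ∫ s in S t, g s :=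
  stmt_6_general a b f g S hS hfpos hgpos hfint hgint hmono
end

section
/- Let H : [0,∞) → [0,∞) be continuous with i := ∫_0^∞ t H(t) dt < ∞, and let h : [0,∞) → ℝ solve h'' = H·h, h(0) = 0, h'(0) = 1 (so h > 0 on (0,∞)). Then h(t) ≤ e^{i} · t for all t ≥ 0. -/
/-!
Since `h'' = H h` with `H ≥ 0`, `h` is convex as long as it stays nonnegative; starting from
`h(0) = 0`, `h'(0) = 1` this keeps `h' > 0` and `h ≥ 0` on all of `[0, ∞)`. Convexity and
`h(0) = 0` give `h(t) ≤ t h'(t)`, hence `h'' = H h ≤ t H(t) h'`, and Grönwall's inequality yields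
`h'(t) ≤ exp (∫₀ᵗ s H(s) ds) ≤ e^i`. Integrating from `0` gives `h(t) ≤ e^i t`.
-/

open MeasureTheory Set Real

section ConvexWhileNonneg

variable {h : ℝ → ℝ}

theorem monotoneOn_deriv_Icc_of_deriv_pos (hh1 : Differentiable ℝ h)
    (hh2 : Differentiable ℝ (deriv h)) (hconv : ∀ t ≥ 0, 0 ≤ h t → 0 ≤ deriv (deriv h) t)
    (h0 : 0 ≤ h 0) {c : ℝ} (hpos : ∀ t ∈ Ico 0 c, 0 < deriv h t) :
    MonotoneOn (deriv h) (Icc 0 c) := by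
  have hmono : MonotoneOn h (Icc 0 c) :=
    monotoneOn_of_deriv_nonneg (convex_Icc 0 c) hh1.continuous.continuousOn hh1.differentiableOn
      fun x hx => (hpos x (Ioo_subset_Ico_self (by rwa [interior_Icc] at hx))).le
  refine monotoneOn_of_deriv_nonneg (convex_Icc 0 c) hh2.continuous.continuousOn
    hh2.differentiableOn fun x hx => ?_
  have hx' : x ∈ Icc 0 c := Ioo_subset_Icc_self (by rwa [interior_Icc] at hx)
  exact hconv x hx'.1 (h0.trans (hmono (left_mem_Icc.2 (hx'.1.trans hx'.2)) hx' hx'.1))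

/-- At the first zero `c` of `h'` on `[0, ∞)`, `h'` would be monotone on `[0, c]`, forcing
`h' c ≥ h' 0 > 0`. -/
theorem deriv_pos_of_convex_while_nonneg (hh1 : Differentiable ℝ h)
    (hh2 : Differentiable ℝ (deriv h)) (hconv : ∀ t ≥ 0, 0 ≤ h t → 0 ≤ deriv (deriv h) t)
    (h0 : 0 ≤ h 0) (h1 : 0 < deriv h 0) : ∀ t ≥ 0, 0 < deriv h t := by
  by_contra! hneg
  set S := {t : ℝ | 0 ≤ t ∧ deriv h t ≤ 0}
  have hSbdd : BddBelow S := ⟨0, fun _ ht => ht.1⟩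
  have hS : IsClosed S := isClosed_Ici.inter (isClosed_le hh2.continuous continuous_const)
  obtain ⟨hc0, hc⟩ := hS.csInf_mem hneg hSbdd
  have hbefore : ∀ t ∈ Ico 0 (sInf S), 0 < deriv h t := fun t ht =>
    lt_of_not_ge fun hle => (csInf_le hSbdd ⟨ht.1, hle⟩).not_gt ht.2
  have := monotoneOn_deriv_Icc_of_deriv_pos hh1 hh2 hconv h0 hbefore
    (left_mem_Icc.2 hc0) ⟨hc0, le_rfl⟩ hc0
  linarith

theorem nonneg_of_convex_while_nonneg (hh1 : Differentiable ℝ h)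
    (hh2 : Differentiable ℝ (deriv h)) (hconv : ∀ t ≥ 0, 0 ≤ h t → 0 ≤ deriv (deriv h) t)
    (h0 : 0 ≤ h 0) (h1 : 0 < deriv h 0) : ∀ t ≥ 0, 0 ≤ h t := by
  have hmono : MonotoneOn h (Ici 0) :=
    monotoneOn_of_deriv_nonneg (convex_Ici 0) hh1.continuous.continuousOn hh1.differentiableOn
      fun x hx => (deriv_pos_of_convex_while_nonneg hh1 hh2 hconv h0 h1 x
        (by rw [interior_Ici] at hx; exact hx.le)).le
  exact fun t ht => h0.trans (hmono self_mem_Ici ht ht)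

end ConvexWhileNonneg

theorem le_mul_deriv_of_deriv_deriv_nonneg {h : ℝ → ℝ} (hh1 : Differentiable ℝ h)
    (hh2 : Differentiable ℝ (deriv h)) (hconv : ∀ t ≥ 0, 0 ≤ deriv (deriv h) t) (h0 : h 0 = 0) :
    ∀ t ≥ 0, h t ≤ t * deriv h t := by
  have hψ : ∀ v, HasDerivAt (fun v => v * deriv h v - h v) (v * deriv (deriv h) v) v := fun v =>
    (((hasDerivAt_id v).mul (hh2 v).hasDerivAt).sub (hh1 v).hasDerivAt).congr_deriv (by simp)
  have hmono : MonotoneOn (fun v => v * deriv h v - h v) (Ici 0) :=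
    monotoneOn_of_deriv_nonneg (convex_Ici 0)
      (Differentiable.continuous fun v => (hψ v).differentiableAt).continuousOn
      (fun v _ => (hψ v).differentiableAt.differentiableWithinAt) fun x hx => by
        rw [interior_Ici] at hx
        rw [(hψ x).deriv]
        exact mul_nonneg hx.le (hconv x hx.le)
  intro t ht
  have := hmono self_mem_Ici ht ht
  simp only [h0, zero_mul, sub_zero] at this
  linarith

section Gronwall

variable {f K : ℝ → ℝ}

/-- `f · exp (-∫₀ᵗ K)` is antitone. -/
theorem le_mul_exp_integral_of_deriv_le_mul (hf : Differentiable ℝ f) (hK : Continuous K)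
    (hle : ∀ t ≥ 0, deriv f t ≤ K t * f t) :
    ∀ t ≥ 0, f t ≤ f 0 * exp (∫ s in 0..t, K s) := by
  set I : ℝ → ℝ := fun t => ∫ s in 0..t, K s
  have hg : ∀ t, HasDerivAt (fun v => f v * exp (-I v))
      (exp (-I t) * (deriv f t - K t * f t)) t := fun t =>
    ((hf t).hasDerivAt.mul (hK.integral_hasStrictDerivAt 0 t).hasDerivAt.neg.exp).congr_deriv
      (by simp only [I, Pi.neg_apply]; ring)
  have hanti : AntitoneOn (fun v => f v * exp (-I v)) (Ici 0) :=
    antitoneOn_of_deriv_nonpos (convex_Ici 0)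
      (Differentiable.continuous fun v => (hg v).differentiableAt).continuousOn
      (fun v _ => (hg v).differentiableAt.differentiableWithinAt) fun x hx => by
        rw [interior_Ici] at hx
        rw [(hg x).deriv]
        exact mul_nonpos_of_nonneg_of_nonpos (exp_pos _).le (sub_nonpos.2 (hle x hx.le))
  intro t ht
  have hgt : f t * exp (-I t) ≤ f 0 := by
    simpa [I] using hanti self_mem_Ici ht ht
  calc f t = f t * exp (-I t) * exp (I t) := by rw [mul_assoc, ← exp_add]; simp
    _ ≤ f 0 * exp (I t) := by gcongr

theorem le_mul_exp_integral_of_deriv_le_mul_of_continuousOn (hf : Differentiable ℝ f)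
    (hK : ContinuousOn K (Ici 0)) (hle : ∀ t ≥ 0, deriv f t ≤ K t * f t) :
    ∀ t ≥ 0, f t ≤ f 0 * exp (∫ s in 0..t, K s) := by
  set K' : ℝ → ℝ := fun s => K (max s 0)
  have hK' : Continuous K' :=
    hK.comp_continuous (continuous_id.max continuous_const) fun s => le_max_right s 0
  have hKK' : ∀ s ≥ 0, K' s = K s := fun s hs => by simp [K', max_eq_left hs]
  intro t ht
  have hint : ∫ s in 0..t, K' s = ∫ s in 0..t, K s :=
    intervalIntegral.integral_congr fun s hs => hKK' s (by rw [uIcc_of_le ht] at hs; exact hs.1)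
  rw [← hint]
  exact le_mul_exp_integral_of_deriv_le_mul hf hK' (fun s hs => hKK' s hs ▸ hle s hs) t ht

end Gronwall

theorem intervalIntegral_le_integral_Ioi {f : ℝ → ℝ} {a t : ℝ} (hf : IntegrableOn f (Ioi a))
    (hnn : ∀ s > a, 0 ≤ f s) (ht : a ≤ t) : ∫ s in a..t, f s ≤ ∫ s in Ioi a, f s := by
  rw [intervalIntegral.integral_of_le ht]
  exact setIntegral_mono_set hf (ae_restrict_of_forall_mem measurableSet_Ioi hnn)
    Ioc_subset_Ioi_self.eventuallyLE

/-- Greene–Wu comparison: h(t) ≤ e^{∫₀^∞ sH(s) ds} t. -/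
theorem stmt_14 (H h : ℝ → ℝ)
    (hHc : ContinuousOn H (Set.Ici 0)) (hHnn : ∀ t ≥ (0 : ℝ), 0 ≤ H t)
    (hint : IntegrableOn (fun s => s * H s) (Set.Ioi 0))
    (hh1 : Differentiable ℝ h) (hh2 : Differentiable ℝ (deriv h))
    (hode : ∀ t ≥ (0 : ℝ), deriv (deriv h) t = H t * h t)
    (h0 : h 0 = 0) (h1 : deriv h 0 = 1) :
    ∀ t ≥ (0 : ℝ), h t ≤ Real.exp (∫ s in Set.Ioi (0 : ℝ), s * H s) * t := by
  have hconv : ∀ t ≥ 0, 0 ≤ h t → 0 ≤ deriv (deriv h) t := fun t ht hht =>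
    hode t ht ▸ mul_nonneg (hHnn t ht) hht
  have hnn := nonneg_of_convex_while_nonneg hh1 hh2 hconv h0.ge (h1 ▸ one_pos)
  have hslope := le_mul_deriv_of_deriv_deriv_nonneg hh1 hh2 (fun t ht => hconv t ht (hnn t ht)) h0
  have hgron : ∀ t ≥ 0, deriv h t ≤ exp (∫ s in 0..t, s * H s) := by
    simpa only [h1, one_mul] using le_mul_exp_integral_of_deriv_le_mul_of_continuousOn (K := fun s => s * H s) hh2
      (continuousOn_id.mul hHc) fun t ht => by
        rw [hode t ht, mul_comm t, mul_assoc]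
        exact mul_le_mul_of_nonneg_left (hslope t ht) (hHnn t ht)
  have hderiv : ∀ t ≥ 0, deriv h t ≤ exp (∫ s in Ioi 0, s * H s) := fun t ht =>
    (hgron t ht).trans <| exp_le_exp.2 <|
      intervalIntegral_le_integral_Ioi hint (fun s hs => mul_nonneg hs.le (hHnn s hs.le)) ht
  intro t ht
  simpa [h0] using (convex_Ici 0).image_sub_le_mul_sub_of_deriv_le hh1.continuous.continuousOn
    hh1.differentiableOn (fun x hx => hderiv x (interior_subset hx)) 0 self_mem_Ici t ht ht
end

section
/- Let p > 1, k > 1 and set, for i ≥ 0, the iteration inequality J_{i+1}^{1/k} ≤ C · D^{i+1} · J_i for positive reals J_i, where C, D > 0 and D ≥ 1. If L := lim_{i→∞} J_i^{1/k^{i+1}} ≤ 1, then J_0 ≤ C^{k/(k−1)} · D^{k²/(k−1)²} · L', where L' denotes the limit above; precisely, J_0 ≤ C^{Σ_{j≥0} k^{-j}} · D^{Σ_{j≥0}(j+1)k^{-j}} · lim_{i→∞} J_i^{1/k^{i+1}} = C^{k/(k−1)} D^{k²/(k−1)²} · L. -/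
/-!
Unrolling `J i ≤ C D^(i+1) J_{i+1}^(1/k)` for `n` steps gives
`J 0 ≤ C^(∑_{i<n} k^{-i}) D^(∑_{i<n} (i+1) k^{-i}) J_n^(k^{-n})`. The exponents of `C` and `D` are
partial sums of the series `∑ k^{-i} = k/(k-1)` and `∑ (i+1) k^{-i} = k²/(k-1)²`, while
`J_n^(k^{-n}) = (J_n^(k^{-(n+1)}))^k → L^k ≤ L` because `0 ≤ L ≤ 1`.
-/

open Filter Finset

theorem le_prod_rpow_mul_rpow_of_le_mul_rpow {a J : ℕ → ℝ} {r : ℝ} (hr : 0 ≤ r)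
    (ha : ∀ i, 0 ≤ a i) (hJ : ∀ i, 0 ≤ J i) (h : ∀ i, J i ≤ a i * J (i + 1) ^ r) (n : ℕ) :
    J 0 ≤ (∏ i ∈ range n, a i ^ r ^ i) * J n ^ r ^ n := by
  induction n with
  | zero => simp
  | succ n ih =>
    have step : J n ^ r ^ n ≤ a n ^ r ^ n * J (n + 1) ^ r ^ (n + 1) := calc
      J n ^ r ^ n ≤ (a n * J (n + 1) ^ r) ^ r ^ n :=
        Real.rpow_le_rpow (hJ n) (h n) (pow_nonneg hr n)
      _ = a n ^ r ^ n * J (n + 1) ^ r ^ (n + 1) := by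
        rw [Real.mul_rpow (ha n) (Real.rpow_nonneg (hJ _) _), ← Real.rpow_mul (hJ _), pow_succ',
          mul_comm r]
    calc J 0 ≤ (∏ i ∈ range n, a i ^ r ^ i) * J n ^ r ^ n := ih
      _ ≤ (∏ i ∈ range n, a i ^ r ^ i) * (a n ^ r ^ n * J (n + 1) ^ r ^ (n + 1)) :=
        mul_le_mul_of_nonneg_left step
          (prod_nonneg fun i _ ↦ Real.rpow_nonneg (ha i) _)
      _ = _ := by rw [prod_range_succ, mul_assoc]

theorem prod_range_mul_pow_succ_rpow {C D : ℝ} (hC : 0 < C) (hD : 0 < D) (r : ℝ) (n : ℕ) :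
    ∏ i ∈ range n, (C * D ^ (i + 1)) ^ r ^ i =
      C ^ (∑ i ∈ range n, r ^ i) * D ^ (∑ i ∈ range n, ((i : ℝ) + 1) * r ^ i) := by
  rw [Real.rpow_sum_of_pos hC, Real.rpow_sum_of_pos hD, ← prod_mul_distrib]
  refine prod_congr rfl fun i _ ↦ ?_
  rw [Real.mul_rpow hC.le (by positivity), ← Real.rpow_natCast D (i + 1), ← Real.rpow_mul hD.le]
  push_cast
  rfl

theorem hasSum_succ_mul_geometric_of_lt_one {r : ℝ} (h₀ : 0 ≤ r) (h₁ : r < 1) :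
    HasSum (fun i : ℕ ↦ ((i : ℝ) + 1) * r ^ i) (1 / (1 - r) ^ 2) := by
  simpa using hasSum_choose_mul_geometric_of_norm_lt_one 1
    (by rwa [Real.norm_of_nonneg h₀] : ‖r‖ < 1)

theorem hasSum_one_div_pow {k : ℝ} (hk : 1 < k) :
    HasSum (fun i : ℕ ↦ (1 / k) ^ i) (k / (k - 1)) := by
  convert hasSum_geometric_of_lt_one (by positivity) ((div_lt_one (by linarith)).2 hk) using 1
  field_simp

theorem hasSum_succ_mul_one_div_pow {k : ℝ} (hk : 1 < k) :
    HasSum (fun i : ℕ ↦ ((i : ℝ) + 1) * (1 / k) ^ i) (k ^ 2 / (k - 1) ^ 2) := by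
  convert hasSum_succ_mul_geometric_of_lt_one (by positivity) ((div_lt_one (by linarith)).2 hk)
    using 1
  field_simp

theorem stmt_19_general (k C D L : ℝ) (hk : 1 < k) (hC : 0 < C) (hD0 : 0 < D)
    (J : ℕ → ℝ) (hJ : ∀ i, 0 < J i)
    (hiter : ∀ i : ℕ, J i ≤ C * D ^ (i + 1) * J (i + 1) ^ (1 / k))
    (hL : Tendsto (fun i : ℕ => J i ^ (1 / k ^ (i + 1))) atTop (nhds L))
    (hL1 : L ≤ 1) :
    J 0 ≤ C ^ (k / (k - 1)) * D ^ (k ^ 2 / (k - 1) ^ 2) * L := by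
  have hk0 : 0 < k := one_pos.trans hk
  have hbound (n : ℕ) : J 0 ≤ C ^ (∑ i ∈ range n, (1 / k) ^ i) *
      D ^ (∑ i ∈ range n, ((i : ℝ) + 1) * (1 / k) ^ i) * J n ^ (1 / k) ^ n := by
    rw [← prod_range_mul_pow_succ_rpow hC hD0]
    exact le_prod_rpow_mul_rpow_of_le_mul_rpow (by positivity) (fun i ↦ by positivity)
      (fun i ↦ (hJ i).le) hiter n
  have hJlim : Tendsto (fun n : ℕ ↦ J n ^ (1 / k) ^ n) atTop (nhds (L ^ k)) := by
    refine (hL.rpow_const (Or.inr hk0.le)).congr fun n ↦ ?_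
    rw [← Real.rpow_mul (hJ n).le, one_div_pow, pow_succ]
    field_simp
  have hClim := tendsto_const_nhds.rpow (hasSum_one_div_pow hk).tendsto_sum_nat (Or.inl hC.ne')
  have hDlim :=
    tendsto_const_nhds.rpow (hasSum_succ_mul_one_div_pow hk).tendsto_sum_nat (Or.inl hD0.ne')
  have hL0 : 0 ≤ L := ge_of_tendsto' hL fun i ↦ Real.rpow_nonneg (hJ i).le _
  calc J 0 ≤ C ^ (k / (k - 1)) * D ^ (k ^ 2 / (k - 1) ^ 2) * L ^ k :=
        ge_of_tendsto' ((hClim.mul hDlim).mul hJlim) hbound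
    _ ≤ C ^ (k / (k - 1)) * D ^ (k ^ 2 / (k - 1) ^ 2) * L := by
      gcongr
      exact Real.rpow_le_self_of_le_one hL0 hL1 hk.le

/-- abstract Moser iteration bound. -/
theorem stmt_19 (k C D L : ℝ) (hk : 1 < k) (hC : 0 < C) (hD0 : 0 < D) (hD : 1 ≤ D)
    (J : ℕ → ℝ) (hJ : ∀ i, 0 < J i)
    (hiter : ∀ i : ℕ, J i ≤ C * D ^ (i + 1) * J (i + 1) ^ (1 / k))
    (hL : Tendsto (fun i : ℕ => J i ^ (1 / k ^ (i + 1))) atTop (nhds L))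
    (hL1 : L ≤ 1) :
    J 0 ≤ C ^ (k / (k - 1)) * D ^ (k ^ 2 / (k - 1) ^ 2) * L :=
  stmt_19_general k C D L hk hC hD0 J hJ hiter hL hL1
end
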